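/- arXiv:2311.18797 — 8 statements merged into one kernel-verified Lean document; each statement's English description precedes it below -/
import Mathlib

section
/- Let X be a k-regular graph with adjacency matrix A having spectral projection E_λ onto the eigenspace of eigenvalue λ = k·cos θ with θ ∈ (0,π). Define F_θ = (1/(2k sin²θ)) (D_t − e^{iθ} D_h)^T E_λ (D_t − e^{−iθ} D_h). Then D_t F_θ D_t^T = (k/2) E_λ. -/
noncomputable section
namespace QW
open SimpleGraph Matrix Complex Finset

variable {V : Type} [Fintype V] [DecidableEq V]

/-- arc-tail incidence matrix: rows indexed by vertices, columns by arcs (darts). -/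
def Dt (G : SimpleGraph V) : Matrix V G.Dart ℂ :=
  Matrix.of fun v d => if d.fst = v then 1 else 0

/-- arc-head incidence matrix. -/
def Dh (G : SimpleGraph V) : Matrix V G.Dart ℂ :=
  Matrix.of fun v d => if d.snd = v then 1 else 0

/-- arc-reversal permutation matrix. -/
def Rrev (G : SimpleGraph V) [DecidableRel G.Adj] : Matrix G.Dart G.Dart ℂ :=
  Matrix.of fun d e => if e = d.symm then 1 else 0

/-- Grover arc-reversal walk transition matrix `U = R(2/k·DtᵀDt − I)`. -/
def Uwalk (G : SimpleGraph V) [DecidableRel G.Adj] (k : ℕ) : Matrix G.Dart G.Dart ℂ :=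
  Rrev G * ((2 / (k : ℂ)) • ((Dt G)ᵀ * Dt G) - 1)

/-- initial state: uniform superposition of outgoing arcs of `a`. -/
def xstate (G : SimpleGraph V) (k : ℕ) (a : V) : G.Dart → ℂ :=
  ((Real.sqrt k : ℂ))⁻¹ • (Dt G)ᵀ.mulVec (Pi.single a 1)

/-- Euclidean norm of a complex vector. -/
def enorm {α : Type} [Fintype α] (v : α → ℂ) : ℝ :=
  Real.sqrt (∑ i, ‖v i‖ ^ 2)

/-- pretty good state transfer from `x` to `y` with respect to `U`. -/
def PGST {α : Type} [Fintype α] [DecidableEq α] (U : Matrix α α ℂ) (x y : α → ℂ) : Prop :=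
  ∃ γ : ℂ, ‖γ‖ = 1 ∧ ∀ ε : ℝ, 0 < ε → ∃ t : ℕ,
    enorm ((U ^ t).mulVec x - γ • y) < ε


lemma DtDt (G : SimpleGraph V) [DecidableRel G.Adj] (k : ℕ) (hreg : G.IsRegularOfDegree k) :
    Dt G * (Dt G)ᵀ = (k : ℂ) • 1 := by
  ext u v
  simp only [Dt, Matrix.mul_apply, Matrix.transpose_apply, Matrix.of_apply,
    Matrix.smul_apply, Matrix.one_apply, ite_mul, one_mul, zero_mul, smul_eq_mul]
  by_cases h : u = v
  · subst h
    rw [if_pos rfl, mul_one]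
    have h1 : (∑ x : G.Dart, if x.toProd.1 = u then (if x.toProd.1 = u then (1:ℂ) else 0) else 0)
        = ∑ x : G.Dart, if x.toProd.1 = u then (1:ℂ) else 0 :=
      Finset.sum_congr rfl (by intro x _; split <;> simp_all)
    rw [h1, Finset.sum_boole]
    have h2 : (Finset.univ.filter (fun d : G.Dart => d.toProd.1 = u)).card = G.degree u :=
      G.dart_fst_fiber_card_eq_degree u
    have h3 := hreg u
    norm_cast
    rw [h2, h3]
  · rw [if_neg h, mul_zero]
    refine Finset.sum_eq_zero fun d _ => ?_
    split_ifs with h1 h2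
    · exact absurd (h1 ▸ h2) h
    · rfl
    · rfl

lemma DtDh (G : SimpleGraph V) [DecidableRel G.Adj] :
    Dt G * (Dh G)ᵀ = G.adjMatrix ℂ := by
  ext u v
  simp only [Dt, Dh, Matrix.mul_apply, Matrix.transpose_apply, Matrix.of_apply, adjMatrix_apply,
    ite_mul, one_mul, zero_mul]
  by_cases h : G.Adj u v
  · rw [Finset.sum_eq_single (SimpleGraph.Dart.mk (u, v) h), if_pos rfl]
    · simp [h]
    · intro d _ hd
      split_ifs with h1 h2
      · exact absurd (SimpleGraph.Dart.ext _ _ (Prod.ext h1 h2)) hd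
      · rfl
      · rfl
    · simp
  · rw [if_neg h]
    refine Finset.sum_eq_zero fun d _ => ?_
    split_ifs with h1 h2
    · exact absurd (by rw [← h1, ← h2]; exact d.adj) h
    · rfl
    · rfl

lemma DhDt (G : SimpleGraph V) [DecidableRel G.Adj] :
    Dh G * (Dt G)ᵀ = G.adjMatrix ℂ := by
  have := DtDh G
  have h2 : (Dt G * (Dh G)ᵀ)ᵀ = (G.adjMatrix ℂ)ᵀ := by rw [this]
  rwa [Matrix.transpose_mul, Matrix.transpose_transpose, SimpleGraph.transpose_adjMatrix] at h2




theorem stmt4 {V : Type} [Fintype V] [DecidableEq V] (G : SimpleGraph V)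
    [DecidableRel G.Adj] (k : ℕ) (hk : 0 < k) (hreg : G.IsRegularOfDegree k)
    (θ : ℝ) (hθ : θ ∈ Set.Ioo 0 Real.pi)
    (E : Matrix V V ℂ) (hE_herm : E.IsHermitian) (hE_idem : E * E = E)
    (hAE : G.adjMatrix ℂ * E = ((k * Real.cos θ : ℝ) : ℂ) • E)
    (hEA : E * G.adjMatrix ℂ = ((k * Real.cos θ : ℝ) : ℂ) • E)
    (F : Matrix G.Dart G.Dart ℂ)
    (hF : F = ((2 * k * Real.sin θ ^ 2 : ℝ) : ℂ)⁻¹ •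
      ((Dt G - Complex.exp (θ * Complex.I) • Dh G)ᵀ * E *
        (Dt G - Complex.exp (-θ * Complex.I) • Dh G))) :
    Dt G * F * (Dt G)ᵀ = ((k : ℂ) / 2) • E := by
  have hsin : Real.sin θ ≠ 0 := (Real.sin_pos_of_pos_of_lt_pi hθ.1 hθ.2).ne'
  have hkc : (k : ℂ) ≠ 0 := Nat.cast_ne_zero.2 hk.ne'
  set e₁ := Complex.exp (θ * Complex.I) with he₁
  set e₂ := Complex.exp (-θ * Complex.I) with he₂
  set lam : ℂ := ((k * Real.cos θ : ℝ) : ℂ) with hlam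
  set c : ℂ := ((2 * k * Real.sin θ ^ 2 : ℝ) : ℂ)⁻¹ with hc
  have hL : Dt G * (Dt G - e₁ • Dh G)ᵀ = (k : ℂ) • 1 - e₁ • G.adjMatrix ℂ := by
    rw [Matrix.transpose_sub, Matrix.transpose_smul, Matrix.mul_sub, Matrix.mul_smul,
      DtDt G k hreg, DtDh]
  have hR : (Dt G - e₂ • Dh G) * (Dt G)ᵀ = (k : ℂ) • 1 - e₂ • G.adjMatrix ℂ := by
    rw [Matrix.sub_mul, Matrix.smul_mul, DtDt G k hreg, DhDt]
  have key : Dt G * F * (Dt G)ᵀ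
      = c • ((Dt G * (Dt G - e₁ • Dh G)ᵀ) * E * ((Dt G - e₂ • Dh G) * (Dt G)ᵀ)) := by
    rw [hF, Matrix.mul_smul, Matrix.smul_mul]
    congr 1
    rw [← Matrix.mul_assoc, ← Matrix.mul_assoc, ← Matrix.mul_assoc, Matrix.mul_assoc]
  rw [key, hL, hR]
  have h5 : ((k : ℂ) • (1 : Matrix V V ℂ) - e₁ • G.adjMatrix ℂ) * E
      = ((k : ℂ) - e₁ * lam) • E := by
    rw [Matrix.sub_mul, Matrix.smul_mul, Matrix.smul_mul, Matrix.one_mul, hAE, smul_smul,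
      sub_smul]
  have h6 : E * ((k : ℂ) • (1 : Matrix V V ℂ) - e₂ • G.adjMatrix ℂ)
      = ((k : ℂ) - e₂ * lam) • E := by
    rw [Matrix.mul_sub, Matrix.mul_smul, Matrix.mul_smul, Matrix.mul_one, hEA, smul_smul,
      sub_smul]
  rw [h5, Matrix.smul_mul, h6, smul_smul, smul_smul]
  congr 1
  have hprod : e₁ * e₂ = 1 := by
    rw [he₁, he₂, ← Complex.exp_add]
    ring_nf
    exact Complex.exp_zero
  have hsum : e₁ + e₂ = 2 * (Real.cos θ : ℂ) := by
    rw [he₁, he₂, Complex.exp_mul_I, Complex.exp_mul_I, Complex.cos_neg, Complex.sin_neg,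
      Complex.ofReal_cos]
    ring
  have hexp : ((k : ℂ) - e₁ * lam) * ((k : ℂ) - e₂ * lam)
      = (k : ℂ) ^ 2 * (Real.sin θ : ℂ) ^ 2 := by
    have hpyth : (Real.sin θ : ℂ) ^ 2 + (Real.cos θ : ℂ) ^ 2 = 1 := by
      norm_cast
      exact_mod_cast Real.sin_sq_add_cos_sq θ
    have : ((k : ℂ) - e₁ * lam) * ((k : ℂ) - e₂ * lam)
        = (k : ℂ) ^ 2 - (e₁ + e₂) * (k : ℂ) * lam + (e₁ * e₂) * lam ^ 2 := by ring
    have hpyth2 := Complex.sin_sq_add_cos_sq (θ : ℂ)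
    rw [this, hprod, hsum, hlam]
    push_cast
    linear_combination (-((k : ℂ))^2) * hpyth2
  rw [mul_assoc, hexp, hc]
  push_cast
  have hs3 : Complex.sin (θ : ℂ) ≠ 0 := by
    rw [← Complex.ofReal_sin]; exact_mod_cast hsin
  have hs2 : ((Real.sin θ : ℂ)) ≠ 0 := by exact_mod_cast hsin
  field_simp

end QW
end
end

section
/- If a non-bipartite connected regular graph X admits pretty good state transfer from x_a = (1/√k)D_t^T e_a to a unit state y, then the rank-one matrix y y* has all real entries. -/
noncomputable section
namespace QW
open SimpleGraph Matrix Complex Finset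

variable {V : Type} [Fintype V] [DecidableEq V]

-- aux lemmas
lemma abs_apply_le_enorm {α : Type} [Fintype α] (v : α → ℂ) (i : α) :
    ‖v i‖ ≤ enorm v := by
  unfold enorm
  rw [show ‖v i‖ = Real.sqrt (‖v i‖ ^ 2) by
    rw [Real.sqrt_sq (norm_nonneg _)]]
  exact Real.sqrt_le_sqrt (Finset.single_le_sum
    (f := fun j => ‖v j‖ ^ 2) (fun j _ => sq_nonneg _) (Finset.mem_univ i))

lemma mulVec_im_zero {α β : Type} [Fintype β] (M : Matrix α β ℂ) (x : β → ℂ)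
    (hM : ∀ i j, (M i j).im = 0) (hx : ∀ j, (x j).im = 0) (i : α) :
    (M.mulVec x i).im = 0 := by
  simp [Matrix.mulVec, dotProduct, Complex.im_sum, Complex.mul_im, hM, hx]

lemma Uwalk_im_zero (G : SimpleGraph V) [DecidableRel G.Adj] (k : ℕ) :
    ∀ d e, ((Uwalk G k) d e).im = 0 := by
  intro d e
  have h2k : ((2 : ℂ) / (k : ℂ)).im = 0 := by
    simp [Complex.div_im]
  simp [Uwalk, Rrev, Dt, Matrix.mul_apply, Matrix.sub_apply, Matrix.one_apply,
    Complex.im_sum, Complex.mul_im, Complex.sub_im, h2k, apply_ite Complex.im,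
    apply_ite Complex.re, Finset.sum_ite_eq]

lemma xstate_im_zero (G : SimpleGraph V) (k : ℕ) (a : V) :
    ∀ d, (xstate G k a d).im = 0 := by
  intro d
  have h1 : (((Real.sqrt k : ℝ) : ℂ))⁻¹.im = 0 := by
    simp [Complex.inv_im]
  have h2 : ((Dt G)ᵀ.mulVec (Pi.single a 1) d).im = 0 := by
    apply mulVec_im_zero
    · intro i j; simp [Dt, Matrix.transpose_apply, apply_ite Complex.im]
    · intro j; by_cases h : j = a <;> simp [Pi.single_apply, h]
  simp only [xstate, Pi.smul_apply, smul_eq_mul, Complex.mul_im, h1, h2]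
  ring

lemma pow_mulVec_im_zero (G : SimpleGraph V) [DecidableRel G.Adj] (k : ℕ) (a : V) (t : ℕ) :
    ∀ d, (((Uwalk G k) ^ t).mulVec (xstate G k a) d).im = 0 := by
  induction t with
  | zero => simpa using xstate_im_zero G k a
  | succ n ih =>
      intro d
      rw [pow_succ', ← Matrix.mulVec_mulVec]
      exact mulVec_im_zero _ _ (Uwalk_im_zero G k) ih d

theorem stmt6 {V : Type} [Fintype V] [DecidableEq V] (G : SimpleGraph V)
    [DecidableRel G.Adj] (k : ℕ) (hk : 0 < k) (hconn : G.Connected)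
    (hreg : G.IsRegularOfDegree k) (hnonbip : ¬ G.Colorable 2)
    (a : V) (y : G.Dart → ℂ) (hy : enorm y = 1)
    (hpgst : PGST (Uwalk G k) (xstate G k a) y) :
    ∀ d e : G.Dart, (y d * (starRingEnd ℂ) (y e)).im = 0 := by
  intro d e
  obtain ⟨γ, hγ, H⟩ := hpgst
  have hγ1 : γ * (starRingEnd ℂ) γ = 1 := by
    rw [Complex.mul_conj, Complex.normSq_eq_norm_sq, hγ]; norm_num
  have hyb : ∀ i, ‖y i‖ ≤ 1 := fun i => hy ▸ abs_apply_le_enorm y i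
  have key : ∀ ε : ℝ, 0 < ε → ε ≤ 1 → |(y d * (starRingEnd ℂ) (y e)).im| ≤ 3 * ε := by
    intro ε hε hε1
    obtain ⟨t, ht⟩ := H ε hε
    set v := ((Uwalk G k) ^ t).mulVec (xstate G k a) with hv
    have hvim : ∀ i, (v i).im = 0 := pow_mulVec_im_zero G k a t
    have hsub : ∀ i, ‖v i - γ * y i‖ < ε := by
      intro i
      calc ‖v i - γ * y i‖
          = ‖(v - γ • y) i‖ := by simp
        _ ≤ enorm (v - γ • y) := abs_apply_le_enorm _ i
        _ < ε := ht
    -- rewrite y d * conj (y e) as (γ y d)(conj (γ y e))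
    have hrw : y d * (starRingEnd ℂ) (y e)
        = (γ * y d) * (starRingEnd ℂ) (γ * y e) := by
      have h : (γ * y d) * (starRingEnd ℂ) (γ * y e)
          = (γ * (starRingEnd ℂ) γ) * (y d * (starRingEnd ℂ) (y e)) := by
        rw [_root_.map_mul]; ring
      rw [h, hγ1, one_mul]
    have him0 : (v d * (starRingEnd ℂ) (v e)).im = 0 := by
      simp [Complex.mul_im, Complex.conj_im, Complex.conj_re, hvim]
    have hb1 : ‖γ * y d‖ ≤ 1 := by
      rw [norm_mul, hγ, one_mul]; exact hyb d
    have hb2 : ‖γ * y e‖ ≤ 1 := by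
      rw [norm_mul, hγ, one_mul]; exact hyb e
    have hvd : ‖v d‖ ≤ 1 + ε := by
      calc ‖v d‖ = ‖γ * y d + (v d - γ * y d)‖ := by congr 1; ring
        _ ≤ ‖γ * y d‖ + ‖v d - γ * y d‖ := norm_add_le _ _
        _ ≤ 1 + ε := add_le_add hb1 (le_of_lt (hsub d))
    calc |(y d * (starRingEnd ℂ) (y e)).im|
        = |((γ * y d) * (starRingEnd ℂ) (γ * y e) - v d * (starRingEnd ℂ) (v e)).im| := by
          rw [hrw, Complex.sub_im, him0, sub_zero]
      _ ≤ ‖(γ * y d) * (starRingEnd ℂ) (γ * y e) - v d * (starRingEnd ℂ) (v e)‖ :=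
          Complex.abs_im_le_norm _
      _ = ‖(γ * y d - v d) * (starRingEnd ℂ) (γ * y e)
            + v d * (starRingEnd ℂ) (γ * y e - v e)‖ := by
          congr 1
          rw [_root_.map_sub]; ring
      _ ≤ ‖(γ * y d - v d) * (starRingEnd ℂ) (γ * y e)‖
            + ‖v d * (starRingEnd ℂ) (γ * y e - v e)‖ := norm_add_le _ _
      _ = ‖γ * y d - v d‖ * ‖γ * y e‖
            + ‖v d‖ * ‖γ * y e - v e‖ := by
          rw [norm_mul, norm_mul, Complex.norm_conj, Complex.norm_conj]
      _ ≤ ε * 1 + (1 + ε) * ε := by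
          apply add_le_add
          · refine mul_le_mul ?_ hb2 (norm_nonneg _) (le_of_lt hε)
            rw [← neg_sub, norm_neg]; exact le_of_lt (hsub d)
          · refine mul_le_mul hvd ?_ (norm_nonneg _) (by linarith)
            rw [← neg_sub, norm_neg]; exact le_of_lt (hsub e)
      _ ≤ 3 * ε := by nlinarith
  by_contra h
  have habs : 0 < |(y d * (starRingEnd ℂ) (y e)).im| := abs_pos.mpr h
  set r := |(y d * (starRingEnd ℂ) (y e)).im| with hr
  have h1 : r ≤ 3 * min 1 (r / 6) :=
    key _ (lt_min one_pos (by linarith)) (min_le_left _ _)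
  have h2 : min 1 (r / 6) ≤ r / 6 := min_le_right _ _
  linarith

end QW
end
end

section
/- Let X be a non-bipartite connected k-regular graph on n vertices. If there is pretty good state transfer from x_a = (1/√k)D_t^T e_a to a flat unit state y (all entries of y have the same absolute value), then y is, up to a unimodular scalar, a vector with all entries in {1/√(nk), −1/√(nk)}. In particular there are at most 2^{nk−1} flat states approachable from a (up to scalars). -/
noncomputable section
namespace QW
open SimpleGraph Matrix Complex Finset

variable {V : Type} [Fintype V] [DecidableEq V]

/-! ### auxiliary lemmas -/

def RealM {α β : Type} (M : Matrix α β ℂ) : Prop := ∀ i j, (M i j).im = 0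

def RealV {α : Type} (v : α → ℂ) : Prop := ∀ i, (v i).im = 0

lemma RealM.mul {α β γ : Type} [Fintype β] {M : Matrix α β ℂ} {N : Matrix β γ ℂ}
    (hM : RealM M) (hN : RealM N) : RealM (M * N) := by
  intro i j
  rw [Matrix.mul_apply, Complex.im_sum]
  refine Finset.sum_eq_zero fun b _ => ?_
  rw [Complex.mul_im, hM i b, hN b j, mul_zero, zero_mul, add_zero]

lemma RealM.mulVec {α β : Type} [Fintype β] {M : Matrix α β ℂ} {v : β → ℂ}
    (hM : RealM M) (hv : RealV v) : RealV (M.mulVec v) := by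
  intro i
  rw [Matrix.mulVec, dotProduct, Complex.im_sum]
  refine Finset.sum_eq_zero fun b _ => ?_
  rw [Complex.mul_im, hM i b, hv b, mul_zero, zero_mul, add_zero]

lemma RealM.pow {α : Type} [Fintype α] [DecidableEq α] {M : Matrix α α ℂ}
    (hM : RealM M) (t : ℕ) : RealM (M ^ t) := by
  induction t with
  | zero => intro i j; simp [Matrix.one_apply]; split <;> simp
  | succ t ih => rw [pow_succ]; exact ih.mul hM

lemma realM_Dt (G : SimpleGraph V) : RealM (Dt G) := by
  intro i j; simp only [Dt, Matrix.of_apply]; split <;> simp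

lemma realM_Uwalk (G : SimpleGraph V) [DecidableRel G.Adj] (k : ℕ) :
    RealM (Uwalk G k) := by
  have h1 : RealM (Rrev G) := by
    intro i j; simp only [Rrev, Matrix.of_apply]; split <;> simp
  have h2 : RealM ((Dt G)ᵀ * Dt G) := by
    refine RealM.mul ?_ (realM_Dt G)
    intro i j; exact realM_Dt G j i
  refine RealM.mul h1 ?_
  intro i j
  simp only [Matrix.sub_apply, Matrix.smul_apply, Matrix.one_apply, smul_eq_mul,
    Complex.sub_im, Complex.mul_im, h2 i j]
  have : ((2 : ℂ) / (k : ℂ)).im = 0 := by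
    simp [Complex.div_im]
  rw [this]
  split <;> simp

lemma realV_xstate (G : SimpleGraph V) (k : ℕ) (a : V) : RealV (xstate G k a) := by
  intro d
  simp only [xstate, Pi.smul_apply, smul_eq_mul, Complex.mul_im]
  have h1 : (((Real.sqrt k : ℝ) : ℂ))⁻¹.im = 0 := by
    rw [← Complex.ofReal_inv]; simp
  have h2 : RealV ((Dt G)ᵀ.mulVec (Pi.single a 1)) := by
    refine RealM.mulVec ?_ ?_
    · intro i j; exact realM_Dt G j i
    · intro i
      rcases eq_or_ne i a with h | h
      · subst h; simp
      · simp [Pi.single_eq_of_ne h]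
  rw [h1, h2 d]
  simp

lemma abs_le_enorm {α : Type} [Fintype α] (v : α → ℂ) (d : α) :
    ‖v d‖ ≤ enorm v := by
  have h1 : ‖v d‖ ^ 2 ≤ ∑ i, ‖v i‖ ^ 2 :=
    Finset.single_le_sum (f := fun i => ‖v i‖ ^ 2)
      (fun i _ => sq_nonneg _) (Finset.mem_univ d)
  calc ‖v d‖ = Real.sqrt (‖v d‖ ^ 2) := by
        rw [Real.sqrt_sq (norm_nonneg _)]
    _ ≤ enorm v := Real.sqrt_le_sqrt h1

/-- core: any flat unit PGST target has, after the PGST phase, all entries `±(√(nk))⁻¹`. -/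
lemma key {V : Type} [Fintype V] [DecidableEq V] (G : SimpleGraph V)
    [DecidableRel G.Adj] (k n : ℕ) (hk : 0 < k) (hn : Fintype.card V = n)
    (hconn : G.Connected) (hreg : G.IsRegularOfDegree k) (a : V)
    (y : G.Dart → ℂ) (hy1 : enorm y = 1) (hy2 : ∃ c : ℝ, ∀ d, ‖y d‖ = c)
    (γ : ℂ) (hγ : ‖γ‖ = 1)
    (hpg : ∀ ε : ℝ, 0 < ε → ∃ t : ℕ,
      enorm (((Uwalk G k) ^ t).mulVec (xstate G k a) - γ • y) < ε) :
    ∀ d : G.Dart, γ * y d = ((Real.sqrt (n * k) : ℝ) : ℂ)⁻¹ ∨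
      γ * y d = -((Real.sqrt (n * k) : ℝ) : ℂ)⁻¹ := by
  obtain ⟨c, hc⟩ := hy2
  have hVpos : 0 < n := by
    rw [← hn]; exact Fintype.card_pos_iff.mpr hconn.nonempty
  have hcard : Fintype.card G.Dart = n * k := by
    rw [SimpleGraph.dart_card_eq_sum_degrees]
    simp [hreg _, hn, Finset.sum_const]
  have hnk : (0 : ℝ) < (n : ℝ) * k := by positivity
  -- compute c
  have hc0 : 0 ≤ c := by
    obtain ⟨d0⟩ := (Fintype.card_pos_iff.mp (by rw [hcard]; positivity : 0 < Fintype.card G.Dart))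
    rw [← hc d0]; exact norm_nonneg _
  have hsum : ∑ d : G.Dart, ‖y d‖ ^ 2 = (n * k : ℝ) * c ^ 2 := by
    simp only [hc]
    rw [Finset.sum_const, Finset.card_univ, hcard]
    push_cast; ring
  have hc2 : (n * k : ℝ) * c ^ 2 = 1 := by
    have := hy1
    rw [enorm, hsum] at this
    have h0 : (0:ℝ) ≤ (n * k : ℝ) * c ^ 2 := by positivity
    nlinarith [Real.sq_sqrt h0, this]
  have hcval : c = (Real.sqrt ((n : ℝ) * k))⁻¹ := by
    have : c ^ 2 = ((n : ℝ) * k)⁻¹ := by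
      field_simp at hc2 ⊢; nlinarith [hc2]
    have h2 : Real.sqrt (c ^ 2) = Real.sqrt (((n : ℝ) * k)⁻¹) := by rw [this]
    rwa [Real.sqrt_sq hc0, Real.sqrt_inv] at h2
  -- realness of γ * y d
  intro d
  have him : (γ * y d).im = 0 := by
    by_contra h
    have hpos : 0 < |(γ * y d).im| := abs_pos.mpr h
    obtain ⟨t, ht⟩ := hpg _ hpos
    have hreal : ((((Uwalk G k) ^ t).mulVec (xstate G k a)) d).im = 0 :=
      ((realM_Uwalk G k).pow t).mulVec (realV_xstate G k a) d
    have hb : |(γ * y d).im| ≤ enorm (((Uwalk G k) ^ t).mulVec (xstate G k a) - γ • y) := by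
      have h2 : ((((Uwalk G k) ^ t).mulVec (xstate G k a) - γ • y) d).im
          = -(γ * y d).im := by
        simp only [Pi.sub_apply, Complex.sub_im, hreal, Pi.smul_apply, smul_eq_mul, zero_sub]
      calc |(γ * y d).im|
          = |((((Uwalk G k) ^ t).mulVec (xstate G k a) - γ • y) d).im| := by
            rw [h2, abs_neg]
        _ ≤ ‖(((Uwalk G k) ^ t).mulVec (xstate G k a) - γ • y) d‖ :=
            Complex.abs_im_le_norm _
        _ ≤ _ := abs_le_enorm _ d
    linarith
  have habs : ‖γ * y d‖ = (Real.sqrt ((n : ℝ) * k))⁻¹ := by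
    rw [norm_mul, hγ, one_mul, hc d, hcval]
  have hre : γ * y d = (((γ * y d).re : ℝ) : ℂ) := by
    exact Complex.ext rfl (by simp [him])
  have habs' : |(γ * y d).re| = (Real.sqrt ((n : ℝ) * k))⁻¹ := by
    have h3 := habs
    rw [hre] at h3
    rwa [Complex.norm_real, Real.norm_eq_abs] at h3
  have hrpos : (0:ℝ) ≤ (Real.sqrt ((n:ℝ)*k))⁻¹ := by positivity
  rcases (abs_eq hrpos).mp habs' with h | h
  · left; rw [hre, h]; push_cast; ring
  · right; rw [hre, h]; push_cast; ring

theorem stmt7 {V : Type} [Fintype V] [DecidableEq V] (G : SimpleGraph V)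
    [DecidableRel G.Adj] (k n : ℕ) (hk : 0 < k) (hn : Fintype.card V = n)
    (hconn : G.Connected) (hreg : G.IsRegularOfDegree k) (hnonbip : ¬ G.Colorable 2)
    (a : V) :
    (∀ y : G.Dart → ℂ, enorm y = 1 → (∃ c : ℝ, ∀ d, ‖y d‖ = c) →
      PGST (Uwalk G k) (xstate G k a) y →
      ∃ γ : ℂ, ‖γ‖ = 1 ∧
        ∀ d : G.Dart, γ * y d = (Real.sqrt (n * k) : ℂ)⁻¹ ∨
          γ * y d = -(Real.sqrt (n * k) : ℂ)⁻¹) ∧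
    ∃ S : Finset (G.Dart → ℂ), S.card ≤ 2 ^ (n * k - 1) ∧
      ∀ y : G.Dart → ℂ, enorm y = 1 → (∃ c : ℝ, ∀ d, ‖y d‖ = c) →
        PGST (Uwalk G k) (xstate G k a) y →
        ∃ γ : ℂ, ‖γ‖ = 1 ∧ γ • y ∈ S := by
  classical
  have hVpos : 0 < n := by
    rw [← hn]; exact Fintype.card_pos_iff.mpr hconn.nonempty
  have hcard : Fintype.card G.Dart = n * k := by
    rw [SimpleGraph.dart_card_eq_sum_degrees]
    simp [hreg _, hn, Finset.sum_const]
  have hDart : Nonempty G.Dart := by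
    rw [← Fintype.card_pos_iff, hcard]; positivity
  obtain ⟨d₀⟩ := hDart
  set r : ℂ := ((Real.sqrt ((n : ℝ) * k) : ℝ) : ℂ)⁻¹ with hr
  have hrne : r ≠ 0 := by
    have hpos : (0:ℝ) < Real.sqrt ((n:ℝ)*k) := Real.sqrt_pos.mpr (by positivity)
    rw [hr]
    simp only [ne_eq, inv_eq_zero, Complex.ofReal_eq_zero]
    exact ne_of_gt hpos
  constructor
  · intro y hy1 hy2 hpg
    obtain ⟨γ, hγ, hpg'⟩ := hpg
    exact ⟨γ, hγ, key G k n hk hn hconn hreg a y hy1 hy2 γ hγ hpg'⟩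
  · refine ⟨Finset.image
      (fun f : {d : G.Dart // d ≠ d₀} → Bool =>
        fun d : G.Dart => if h : d = d₀ then r else if f ⟨d, h⟩ then r else -r)
      Finset.univ, ?_, ?_⟩
    · calc _ ≤ (Finset.univ : Finset ({d : G.Dart // d ≠ d₀} → Bool)).card :=
          Finset.card_image_le
        _ = 2 ^ (n * k - 1) := by
          rw [Finset.card_univ, Fintype.card_fun, Fintype.card_bool]
          congr 1
          have h5 : Fintype.card {d : G.Dart // d ≠ d₀} =
              Fintype.card G.Dart - Fintype.card {d : G.Dart // d = d₀} :=
            Fintype.card_subtype_compl _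
          rw [h5, Fintype.card_subtype_eq, hcard]
    · intro y hy1 hy2 hpg
      obtain ⟨γ₀, hγ₀, hpg'⟩ := hpg
      have hkey := key G k n hk hn hconn hreg a y hy1 hy2 γ₀ hγ₀ hpg'
      -- choose sign
      have : ∃ γ : ℂ, ‖γ‖ = 1 ∧ γ * y d₀ = r ∧
          ∀ d, γ * y d = r ∨ γ * y d = -r := by
        rcases hkey d₀ with h | h
        · exact ⟨γ₀, hγ₀, h, hkey⟩
        · refine ⟨-γ₀, by simp [hγ₀], by rw [neg_mul, h, neg_neg], fun d => ?_⟩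
          rcases hkey d with h' | h'
          · right; rw [neg_mul, h']
          · left; rw [neg_mul, h', neg_neg]
      obtain ⟨γ, hγ, hγd₀, hγall⟩ := this
      refine ⟨γ, hγ, ?_⟩
      rw [Finset.mem_image]
      refine ⟨fun d => decide (γ * y d.val = r), Finset.mem_univ _, ?_⟩
      funext d
      by_cases h : d = d₀
      · subst h; simp [hγd₀]
      · rw [dif_neg h]
        rcases hγall d with h' | h'
        · rw [if_pos (by simp [h'])]
          exact h'.symm
        · have hne : γ * y d ≠ r := by
            rw [h']; intro hcontra
            exact hrne (by linear_combination -hcontra / 2)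
          rw [if_neg (by simp [hne])]
          exact h'.symm

end QW
end
end

section
/- Let X be a strongly regular graph with parameters (4m², 2m² + m, m² + m, m² + m) for a positive integer m, with adjacency matrix A. Then H = J − 2A is a regular real Hadamard matrix of order 4m², where J is the all-ones matrix. -/
/-!
Write `J` for the all-ones matrix. Since `A` is symmetric with constant row sums `k`, it commutes
with `J`, so `(J - 2A)² = J² - 4kJ + 4A²`. When `λ = μ` the strongly regular relation reads
`A² = (k - μ)I + μJ`, hence `(J - 2A)² = (n - 4k + 4μ)J + 4(k - μ)I`, which is `nI` exactly
when `n = 4(k - μ)`; for the parameters `(4m², 2m² + m, m² + m, m² + m)` this holds.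
-/

open Matrix

namespace Matrix

variable {V R : Type*} [Fintype V] [CommRing R]

theorem allOnes_mul_allOnes :
    (of fun _ _ => (1 : R) : Matrix V V R) * of (fun _ _ => 1) =
      (Fintype.card V : R) • of fun _ _ => 1 := by
  ext i j
  simp [mul_apply]

theorem allOnes_mul_eq_of_mul_allOnes {A : Matrix V V R} {k : R} (hsymm : Aᵀ = A)
    (hAJ : A * of (fun _ _ => 1) = k • of fun _ _ => 1) :
    of (fun _ _ => 1) * A = k • of fun _ _ => 1 := by
  have hJT : (of fun _ _ => (1 : R) : Matrix V V R)ᵀ = of fun _ _ => 1 := rfl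
  simpa only [transpose_mul, transpose_smul, hsymm, hJT] using congrArg transpose hAJ

theorem mulVec_one_eq_of_mul_allOnes {M : Matrix V V R} {s : R}
    (hM : M * of (fun _ _ => 1) = s • of fun _ _ => 1) :
    M *ᵥ (fun _ => 1) = fun _ => s := by
  funext i
  simpa [mul_apply, mulVec, dotProduct] using congrFun (congrFun hM i) i

omit [Fintype V] in
theorem allOnes_sub_two_nsmul_apply {A : Matrix V V R} (h01 : ∀ i j, A i j = 0 ∨ A i j = 1)
    (i j : V) :
    (of (fun _ _ => 1) - 2 • A : Matrix V V R) i j = 1 ∨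
      (of (fun _ _ => 1) - 2 • A : Matrix V V R) i j = -1 := by
  rcases h01 i j with h | h
  · left; simp [h]
  · right; norm_num [h]

theorem sub_two_nsmul_mul_self [DecidableEq V] {n k μ : R} {A J : Matrix V V R}
    (hJJ : J * J = n • J) (hAJ : A * J = k • J) (hJA : J * A = k • J)
    (hsrg : A * A = k • 1 + μ • A + μ • (J - 1 - A)) (hn : n = 4 * (k - μ)) :
    (J - 2 • A) * (J - 2 • A) = n • 1 := by
  have : (J - 2 • A) * (J - 2 • A) = J * J - 2 • (J * A) - 2 • (A * J) + 4 • (A * A) := by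
    simp only [sub_mul, mul_sub, smul_mul_assoc, mul_smul_comm]
    module
  rw [this, hJJ, hJA, hAJ, hsrg, hn]
  module

end Matrix

theorem stmt11_general {V : Type} [Fintype V] [DecidableEq V] (m : ℕ)
    (hcard : Fintype.card V = 4 * m ^ 2)
    (A : Matrix V V ℝ) (J : Matrix V V ℝ) (hJ : J = Matrix.of fun _ _ => (1 : ℝ))
    (hsymm : Aᵀ = A)
    (h01 : ∀ i j, A i j = 0 ∨ A i j = 1)
    (hsrg : A * A = (2 * m ^ 2 + m : ℝ) • (1 : Matrix V V ℝ)
      + (m ^ 2 + m : ℝ) • A + (m ^ 2 + m : ℝ) • (J - 1 - A))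
    (hAJ : A * J = (2 * m ^ 2 + m : ℝ) • J)
    (H : Matrix V V ℝ) (hH : H = J - 2 • A) :
    (∀ i j, H i j = 1 ∨ H i j = -1) ∧
    H * Hᵀ = (4 * m ^ 2 : ℝ) • (1 : Matrix V V ℝ) ∧
    ∃ s : ℝ, H.mulVec (fun _ => 1) = fun _ => s := by
  subst hJ hH
  have hJJ := allOnes_mul_allOnes (V := V) (R := ℝ)
  rw [hcard, Nat.cast_mul, Nat.cast_pow] at hJJ
  have hJA := allOnes_mul_eq_of_mul_allOnes hsymm hAJ
  have hHT : (of (fun _ _ => (1 : ℝ)) - 2 • A)ᵀ = of (fun _ _ => 1) - 2 • A := by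
    rw [transpose_sub, transpose_smul, hsymm]
    rfl
  have hHJ : (of (fun _ _ => (1 : ℝ)) - 2 • A) * of (fun _ _ => 1) =
      (4 * m ^ 2 - 2 * (2 * m ^ 2 + m) : ℝ) • of fun _ _ => 1 := by
    rw [sub_mul, hJJ, smul_mul_assoc, hAJ]
    module
  refine ⟨allOnes_sub_two_nsmul_apply h01, ?_, ⟨_, mulVec_one_eq_of_mul_allOnes hHJ⟩⟩
  rw [hHT]
  exact sub_two_nsmul_mul_self hJJ hAJ hJA hsrg (by ring)

theorem stmt11 {V : Type} [Fintype V] [DecidableEq V] (m : ℕ) (hm : 1 ≤ m)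
    (hcard : Fintype.card V = 4 * m ^ 2)
    (A : Matrix V V ℝ) (J : Matrix V V ℝ) (hJ : J = Matrix.of fun _ _ => (1 : ℝ))
    (hsymm : Aᵀ = A) (hdiag : ∀ i, A i i = 0)
    (h01 : ∀ i j, A i j = 0 ∨ A i j = 1)
    (hsrg : A * A = (2 * m ^ 2 + m : ℝ) • (1 : Matrix V V ℝ)
      + (m ^ 2 + m : ℝ) • A + (m ^ 2 + m : ℝ) • (J - 1 - A))
    (hAJ : A * J = (2 * m ^ 2 + m : ℝ) • J)
    (H : Matrix V V ℝ) (hH : H = J - 2 • A) :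
    (∀ i j, H i j = 1 ∨ H i j = -1) ∧
    H * Hᵀ = (4 * m ^ 2 : ℝ) • (1 : Matrix V V ℝ) ∧
    ∃ s : ℝ, H.mulVec (fun _ => 1) = fun _ => s :=
  stmt11_general m hcard A J hJ hsymm h01 hsrg hAJ H hH
end

section
/- For every integer m ≥ 1, the number arccos(1/(2m+1))/π is irrational; equivalently, arccos(1/(2m+1)) is not a rational multiple of π. -/
private def chb (M : ℤ) : ℕ → ℤ
  | 0 => 1
  | 1 => 1
  | (n+2) => 2 * chb M (n+1) - M^2 * chb M n

private lemma chb_cos (M : ℤ) (hM : (1:ℝ) ≤ M) (θ : ℝ) (hθ : Real.cos θ = 1 / M) :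
    ∀ n : ℕ, (M:ℝ)^n * Real.cos (n * θ) = chb M n := by
  have hM0 : (M:ℝ) ≠ 0 := by positivity
  have key : ∀ x : ℝ, Real.cos ((x+2) * θ) = 2 * Real.cos θ * Real.cos ((x+1)*θ) - Real.cos (x*θ) := by
    intro x
    have h1 : (x+2) * θ = ((x+1)*θ) + θ := by ring
    have h2 : x * θ = ((x+1)*θ) - θ := by ring
    rw [h1, Real.cos_add]
    rw [h2, Real.cos_sub]
    ring
  intro n
  induction n using Nat.strong_induction_on with
  | _ n ih =>
    match n with
    | 0 => simp [chb]
    | 1 => simp only [chb, Nat.cast_one, one_mul, pow_one, hθ, Int.cast_one]; field_simp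
    | (n+2) =>
      have e1 := ih (n+1) (by omega)
      have e2 := ih n (by omega)
      push_cast at e1 e2 ⊢
      rw [show chb M (n+2) = 2 * chb M (n+1) - M^2 * chb M n from rfl]
      push_cast
      rw [key, hθ, ← e1, ← e2]
      field_simp
      ring

private lemma chb_mod (M : ℤ) : ∀ n : ℕ, chb M (n+1) ≡ 2^n [ZMOD M] := by
  intro n
  induction n using Nat.strong_induction_on with
  | _ n ih =>
    match n with
    | 0 => simp [chb]
    | (n+1) =>
      have h1 := ih n (by omega)
      have h0 : M^2 * chb M n ≡ 0 * chb M n [ZMOD M] :=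
        Int.ModEq.mul_right _ ((Int.modEq_zero_iff_dvd).2 ⟨M, by ring⟩)
      calc chb M (n+2) = 2 * chb M (n+1) - M^2 * chb M n := rfl
        _ ≡ 2 * 2^n - 0 * chb M n [ZMOD M] := (h1.mul_left 2).sub h0
        _ = 2^(n+1) := by ring

theorem stmt13 (m : ℕ) (hm : 1 ≤ m) :
    Irrational (Real.arccos (1 / (2 * m + 1)) / Real.pi) := by
  set M : ℤ := 2 * m + 1 with hMdef
  have hm' : (1:ℝ) ≤ m := by exact_mod_cast hm
  have hM : (1:ℝ) ≤ M := by rw [hMdef]; push_cast; linarith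
  set θ := Real.arccos (1 / (2 * m + 1)) with hθdef
  have hMR : ((M:ℝ)) = 2 * m + 1 := by rw [hMdef]; push_cast; ring
  have hcos : Real.cos θ = 1 / M := by
    rw [hθdef, hMR]
    apply Real.cos_arccos
    · have : (0:ℝ) ≤ 1 / (2 * (m:ℝ) + 1) := by positivity
      linarith
    · rw [div_le_one (by positivity)]; linarith
  rintro ⟨q, hq⟩
  have hπ : Real.pi ≠ 0 := Real.pi_ne_zero
  have hθeq : θ = (q:ℝ) * Real.pi := by
    field_simp at hq; linarith [hq]
  have hdq : ((q.den:ℝ)) * (q:ℝ) = (q.num:ℝ) := by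
    have : ((q.den:ℚ)) * q = q.num := by
      rw [mul_comm, Rat.mul_den_eq_num]
    exact_mod_cast this
  have hdθ : (q.den : ℝ) * θ = (q.num : ℝ) * Real.pi := by
    rw [hθeq, ← mul_assoc, hdq]
  -- key identity
  have hkey := chb_cos M hM θ hcos q.den
  rw [hdθ] at hkey
  have habs : |(chb M q.den : ℝ)| = (M:ℝ)^q.den := by
    rw [← hkey, abs_mul, Real.abs_cos_int_mul_pi, mul_one, abs_of_nonneg (by positivity)]
  have habsZ : |chb M q.den| = M ^ q.den := by
    exact_mod_cast habs
  have hdvd : M ∣ chb M q.den := by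
    rw [← dvd_abs, habsZ]
    exact dvd_pow_self M (by exact_mod_cast q.pos.ne')
  obtain ⟨e, he⟩ : ∃ e, q.den = e + 1 := ⟨q.den - 1, by have := q.pos; omega⟩
  have hmod := chb_mod M e
  rw [← he] at hmod
  have h2 : (M : ℤ) ∣ 2 ^ e := by
    simpa using dvd_add hmod.dvd hdvd
  -- M odd ≥ 3 cannot divide a power of 2
  have hcop : Nat.Coprime (2 * m + 1) 2 :=
    Nat.coprime_two_right.mpr ⟨m, by ring⟩
  have hdvdN : (2 * m + 1) ∣ 2 ^ e := by
    have := Int.natAbs_dvd_natAbs.mpr h2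
    simpa [hMdef, Int.natAbs_pow, show (2 * (m:ℤ) + 1).natAbs = 2 * m + 1 by omega] using this
  have := (hcop.pow_right e).eq_one_of_dvd hdvdN
  omega
end

section
/- Let m ≥ 1 be an integer and set θ_λ = arccos(m/(2m²+m)) and θ_τ = arccos(−m/(2m²+m)) (so θ_λ = arccos(1/(2m+1)) and θ_τ = π − θ_λ). If integers ℓ_1, ℓ_2 satisfy ℓ_1 θ_λ + ℓ_2 θ_τ ≡ 0 (mod 2π), then ℓ_1 and ℓ_2 are both even. -/
private def seqA (M : ℤ) : ℕ → ℤ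
  | 0 => 1
  | 1 => 1
  | (n+2) => 2 * seqA M (n+1) - M^2 * seqA M n

private lemma seqA_real (Mi : ℤ) (hM : (0:ℝ) < (Mi:ℝ)) (θ : ℝ)
    (hc : Real.cos θ = 1 / (Mi:ℝ)) :
    ∀ n : ℕ, (seqA Mi n : ℝ) = (Mi:ℝ) ^ n * Real.cos (n * θ) := by
  have hM0 : (Mi:ℝ) ≠ 0 := ne_of_gt hM
  intro n
  induction n using Nat.twoStepInduction with
  | zero => simp [seqA]
  | one => simp [seqA, hc]; field_simp
  | more n ih1 ih2 =>
    have hco : Real.cos ((n+2 : ℕ) * θ) =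
        2 * Real.cos θ * Real.cos ((n+1 : ℕ) * θ) - Real.cos ((n:ℕ) * θ) := by
      have h1 := Real.cos_add ((n+1 : ℕ) * θ) θ
      have h2 := Real.cos_sub ((n+1 : ℕ) * θ) θ
      push_cast at h1 h2 ⊢
      have e1 : ((n:ℝ)+1) * θ + θ = ((n:ℝ)+2) * θ := by ring
      have e2 : ((n:ℝ)+1) * θ - θ = (n:ℝ) * θ := by ring
      rw [e1] at h1; rw [e2] at h2
      linarith
    show (seqA Mi (n+2) : ℝ) = _
    rw [seqA, hco, hc]
    push_cast
    push_cast at ih1 ih2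
    rw [ih1, ih2]
    field_simp
    ring

private lemma seqA_mod (Mi p : ℤ) (hp : p ∣ Mi) :
    ∀ n : ℕ, p ∣ seqA Mi (n+1) - 2^n := by
  have key : ∀ n : ℕ, (p ∣ seqA Mi (n+1) - 2^n) ∧ (p ∣ seqA Mi (n+2) - 2^(n+1)) := by
    intro n
    induction n with
    | zero =>
      constructor
      · simp [seqA]
      · have h2 : seqA Mi 2 - 2^1 = -(Mi^2) := by
          show (2 * seqA Mi 1 - Mi^2 * seqA Mi 0) - 2^1 = -(Mi^2)
          simp [seqA]
        rw [h2]
        exact dvd_neg.mpr (hp.trans (dvd_pow_self Mi two_ne_zero))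
    | succ n ih =>
      refine ⟨ih.2, ?_⟩
      have : seqA Mi (n+3) - 2^(n+2) = 2 * (seqA Mi (n+2) - 2^(n+1)) - Mi^2 * seqA Mi (n+1) := by
        show (2 * seqA Mi (n+2) - Mi^2 * seqA Mi (n+1)) - 2^(n+2) = _
        ring
      rw [this]
      exact dvd_sub (ih.2.mul_left 2) ((hp.trans (dvd_pow_self Mi two_ne_zero)).mul_right _)
  exact fun n => (key n).1

theorem stmt14 (m : ℕ) (hm : 1 ≤ m)
    (θlam θtau : ℝ)
    (hlam : θlam = Real.arccos ((m : ℝ) / (2 * m ^ 2 + m)))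
    (htau : θtau = Real.arccos (-(m : ℝ) / (2 * m ^ 2 + m)))
    (l₁ l₂ : ℤ) (q : ℤ)
    (hrel : (l₁ : ℝ) * θlam + (l₂ : ℝ) * θtau = 2 * Real.pi * q) :
    Even l₁ ∧ Even l₂ := by
  set Mi : ℤ := 2 * m + 1 with hMi
  have hmR : (0:ℝ) < (m:ℝ) := by exact_mod_cast hm
  have hMR : (0:ℝ) < (Mi:ℝ) := by rw [hMi]; push_cast; linarith
  -- simplify the argument of arccos
  have harg : (m : ℝ) / (2 * m ^ 2 + m) = 1 / (Mi:ℝ) := by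
    rw [hMi]
    push_cast
    rw [div_eq_div_iff (by nlinarith) (by linarith)]
    ring
  have hb1 : (-1:ℝ) ≤ 1 / (Mi:ℝ) := by
    have : (0:ℝ) ≤ 1 / (Mi:ℝ) := by positivity
    linarith
  have hb2 : 1 / (Mi:ℝ) ≤ 1 := by
    rw [div_le_one hMR, hMi]; push_cast; linarith
  have hcos : Real.cos θlam = 1 / (Mi:ℝ) := by
    rw [hlam, harg, Real.cos_arccos hb1 hb2]
  have htau' : θtau = Real.pi - θlam := by
    rw [htau, hlam, harg, ← harg, neg_div, Real.arccos_neg, harg]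
  -- derive the key linear relation
  have hkey : ((l₁ - l₂ : ℤ) : ℝ) * θlam = ((2*q - l₂ : ℤ) : ℝ) * Real.pi := by
    push_cast
    rw [htau'] at hrel
    ring_nf
    ring_nf at hrel
    linarith
  set n : ℤ := l₁ - l₂ with hn
  set k : ℤ := 2*q - l₂ with hk
  have hn0 : n = 0 := by
    by_contra hne
    set j : ℕ := n.natAbs with hj
    have hj1 : 1 ≤ j := by
      have := Int.natAbs_pos.mpr hne; omega
    -- cos(j θlam)^2 = 1
    have hjθ : Real.cos ((j:ℝ) * θlam) ^ 2 = 1 := by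
      have hsin : Real.sin ((j:ℝ) * θlam) = 0 := by
        rcases Int.natAbs_eq n with h | h
        · have hnj : (n:ℝ) = (j:ℝ) := by rw [hj, Nat.cast_natAbs]; exact_mod_cast h
          have : (j:ℝ) * θlam = (k:ℝ) * Real.pi := by rw [← hnj]; exact hkey
          rw [this]; exact Real.sin_int_mul_pi k
        · have hnj : (n:ℝ) = -(j:ℝ) := by rw [hj, Nat.cast_natAbs]; exact_mod_cast h
          have : (j:ℝ) * θlam = -((k:ℝ) * Real.pi) := by
            rw [hnj] at hkey; linarith
          rw [this, Real.sin_neg]; simp [Real.sin_int_mul_pi k]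
      have := Real.sin_sq_add_cos_sq ((j:ℝ) * θlam)
      nlinarith
    -- so (seqA Mi j)^2 = Mi^(2j)
    have hreal := seqA_real Mi hMR θlam hcos j
    have hsq : (seqA Mi j)^2 = Mi^(2*j) := by
      have : ((seqA Mi j : ℤ) : ℝ)^2 = ((Mi^(2*j) : ℤ) : ℝ) := by
        push_cast
        rw [hreal]
        rw [mul_pow, ← pow_mul, hjθ, mul_one, mul_comm j 2]
      exact_mod_cast this
    -- p divides Mi and hence seqA Mi j
    set p : ℕ := (2*m+1).minFac with hp
    have hpp : p.Prime := Nat.minFac_prime (by omega)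
    have hpd : (p:ℤ) ∣ Mi := by
      have := Nat.minFac_dvd (2*m+1)
      rw [hMi]; exact_mod_cast Int.natCast_dvd_natCast.mpr this
    have hpodd : p ≠ 2 := by
      intro h2
      have := Nat.minFac_dvd (2*m+1)
      rw [← hp, h2] at this
      omega
    have hpint : Prime (p:ℤ) := Nat.prime_iff_prime_int.mp hpp
    have hds : (p:ℤ) ∣ seqA Mi j := by
      have : (p:ℤ) ∣ (seqA Mi j)^2 := by
        rw [hsq]; exact hpd.trans (dvd_pow_self Mi (by omega))
      exact hpint.dvd_of_dvd_pow this
    -- but seqA Mi j ≡ 2^(j-1) mod p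
    clear_value j
    obtain ⟨j', rfl⟩ : ∃ j', j = j' + 1 := ⟨j - 1, by omega⟩
    have hmod := seqA_mod Mi (p:ℤ) hpd j'
    have : (p:ℤ) ∣ 2^j' := by
      have := dvd_sub hds hmod
      simpa using this
    have : (p:ℕ) ∣ 2^j' := by exact_mod_cast this
    have := hpp.dvd_of_dvd_pow this
    exact hpodd ((Nat.prime_dvd_prime_iff_eq hpp Nat.prime_two).mp this)
  -- conclude
  have hl : l₁ = l₂ := by omega
  have hk0 : k = 0 := by
    rw [hn0] at hkey
    simp at hkey
    exact_mod_cast hkey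
  refine ⟨?_, ?_⟩ <;> [skip; skip]
  · exact ⟨q, by omega⟩
  · exact ⟨q, by omega⟩
end

section
/- Kronecker's approximation theorem (homogeneous characterization): given real numbers α_1,...,α_n and β_1,...,β_n, the following are equivalent: (i) for every ε > 0 there exist integers q, p_1,...,p_n with |q α_r − β_r − p_r| < ε for all r; (ii) for every integer tuple (ℓ_1,...,ℓ_n) with ℓ_1 α_1 + ... + ℓ_n α_n ∈ ℤ, one has ℓ_1 β_1 + ... + ℓ_n β_n ∈ ℤ. -/
open Finset

noncomputable section KroneckerAux

open MeasureTheory Complex Submodule Set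

namespace KroneckerProof

variable {n : ℕ}

abbrev Tor (n : ℕ) := Fin n → AddCircle (1 : ℝ)

instance : Fact ((0:ℝ) < 1) := ⟨one_pos⟩

/-- characters of the torus -/
def kchar (l : Fin n → ℤ) : C(Tor n, ℂ) :=
  ∏ r, (fourier (l r)).comp ⟨fun x => x r, continuous_apply r⟩

lemma kchar_apply (l : Fin n → ℤ) (x : Tor n) :
    kchar l x = ∏ r, fourier (l r) (x r) := by
  simp [kchar]

lemma fourier_add_arg (m : ℤ) (a b : AddCircle (1:ℝ)) :
    fourier m (a + b) = fourier m a * fourier m b := by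
  simp only [fourier_apply, smul_add, AddCircle.toCircle_add, Circle.coe_mul]

lemma kchar_add_arg (l : Fin n → ℤ) (x y : Tor n) :
    kchar l (x + y) = kchar l x * kchar l y := by
  simp only [kchar_apply, Pi.add_apply, fourier_add_arg]
  rw [Finset.prod_mul_distrib]

lemma kchar_zero_arg (l : Fin n → ℤ) : kchar l (0 : Tor n) = 1 := by
  simp [kchar_apply, fourier_eval_zero]

lemma kchar_zero (x : Tor n) : kchar (0 : Fin n → ℤ) x = 1 := by
  simp [kchar_apply, fourier_zero]

lemma kchar_add (l m : Fin n → ℤ) (x : Tor n) :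
    kchar (l + m) x = kchar l x * kchar m x := by
  simp only [kchar_apply, Pi.add_apply, fourier_add]
  rw [Finset.prod_mul_distrib]

lemma kchar_mk (l : Fin n → ℤ) (x : Fin n → ℝ) :
    kchar l (fun r => (x r : AddCircle (1:ℝ))) =
      Complex.exp (2 * Real.pi * Complex.I * ∑ r, (l r : ℂ) * (x r : ℂ)) := by
  rw [kchar_apply]
  simp only [fourier_coe_apply]
  rw [← Complex.exp_sum]
  congr 1
  rw [Finset.mul_sum]
  refine Finset.sum_congr rfl fun r _ => ?_
  push_cast
  ring

lemma kchar_mk_eq_one_iff (l : Fin n → ℤ) (x : Fin n → ℝ) :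
    kchar l (fun r => (x r : AddCircle (1:ℝ))) = 1 ↔
      ∃ z : ℤ, ∑ r, (l r : ℝ) * x r = (z : ℝ) := by
  rw [kchar_mk, Complex.exp_eq_one_iff]
  constructor
  · rintro ⟨z, hz⟩
    refine ⟨z, ?_⟩
    have h2 : (2 * Real.pi * Complex.I) ≠ 0 := by
      simp [Real.pi_ne_zero, Complex.I_ne_zero]
    rw [mul_comm (z:ℂ) _] at hz
    have := mul_left_cancel₀ h2 hz
    have : ((∑ r, (l r : ℝ) * x r : ℝ) : ℂ) = ((z : ℝ) : ℂ) := by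
      push_cast
      rw [← this]
    exact_mod_cast this
  · rintro ⟨z, hz⟩
    refine ⟨z, ?_⟩
    have : (∑ r, (l r : ℂ) * (x r : ℂ)) = ((z : ℝ) : ℂ) := by
      rw [← hz]; push_cast; rfl
    rw [this]; push_cast; ring

/-- the subgroup on which a character is trivial -/
def kker (l : Fin n → ℤ) : AddSubgroup (Tor n) where
  carrier := {x | kchar l x = 1}
  zero_mem' := kchar_zero_arg l
  add_mem' := by
    intro a b ha hb
    simp only [Set.mem_setOf_eq] at *
    rw [kchar_add_arg, ha, hb, one_mul]
  neg_mem' := by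
    intro a ha
    simp only [Set.mem_setOf_eq] at *
    have : kchar l (a + -a) = 1 := by rw [add_neg_cancel]; exact kchar_zero_arg l
    rw [kchar_add_arg, ha, one_mul] at this
    exact this

lemma isClosed_kker (l : Fin n → ℤ) : IsClosed ((kker l : AddSubgroup (Tor n)) : Set (Tor n)) :=
  isClosed_eq (kchar l).continuous continuous_const

/-- The span of the characters is dense in `C(Tor n, ℂ)`. -/
def kSubalgebra (n : ℕ) : StarSubalgebra ℂ C(Tor n, ℂ) where
  toSubalgebra := Algebra.adjoin ℂ (Set.range kchar)
  star_mem' := by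
    show Algebra.adjoin ℂ (Set.range (kchar (n := n))) ≤
      star (Algebra.adjoin ℂ (Set.range (kchar (n := n))))
    refine Algebra.adjoin_le ?_
    rintro - ⟨l, rfl⟩
    refine Algebra.subset_adjoin ⟨-l, ?_⟩
    ext x
    show kchar (-l) x = star (kchar l x)
    rw [kchar_apply, kchar_apply, ← starRingEnd_apply, map_prod]
    exact Finset.prod_congr rfl fun r _ => by rw [Pi.neg_apply, fourier_neg]

lemma kSubalgebra_coe :
    Subalgebra.toSubmodule (kSubalgebra n).toSubalgebra = span ℂ (Set.range (kchar (n := n))) := by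
  apply Algebra.adjoin_eq_span_of_subset
  refine Subset.trans ?_ Submodule.subset_span
  intro x hx
  refine Submonoid.closure_induction (fun _ h => h) ⟨0, ?_⟩ ?_ hx
  · ext1 z; exact kchar_zero z
  · rintro - - - - ⟨l, rfl⟩ ⟨m, rfl⟩
    refine ⟨l + m, ?_⟩
    ext1 z
    exact kchar_add l m z

lemma kSubalgebra_separatesPoints : (kSubalgebra n).SeparatesPoints := by
  intro x y hxy
  obtain ⟨r, hr⟩ : ∃ r, x r ≠ y r := by
    by_contra h
    push_neg at h
    exact hxy (funext h)
  refine ⟨_, ⟨kchar (Pi.single r 1), Algebra.subset_adjoin ⟨_, rfl⟩, rfl⟩, ?_⟩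
  dsimp only
  rw [kchar_apply, kchar_apply]
  rw [Finset.prod_eq_single r (fun s _ hs => by simp [Pi.single_eq_of_ne hs, fourier_zero])
      (fun h => absurd (Finset.mem_univ r) h),
    Finset.prod_eq_single r (fun s _ hs => by simp [Pi.single_eq_of_ne hs, fourier_zero])
      (fun h => absurd (Finset.mem_univ r) h)]
  simp only [Pi.single_eq_same, fourier_one]
  intro h
  rw [Circle.coe_inj] at h
  exact hr (AddCircle.injective_toCircle one_ne_zero h)

lemma span_kchar_dense :
    (span ℂ (Set.range (kchar (n := n)))).topologicalClosure = ⊤ := by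
  rw [← kSubalgebra_coe]
  have := ContinuousMap.starSubalgebra_topologicalClosure_eq_top_of_separatesPoints
    (kSubalgebra n) kSubalgebra_separatesPoints
  exact congr_arg (Subalgebra.toSubmodule <| StarSubalgebra.toSubalgebra ·) this

lemma continuous_integrable {X : Type*} [TopologicalSpace X] [CompactSpace X] [T2Space X]
    [MeasurableSpace X] [OpensMeasurableSpace X] {μ : Measure X} [IsFiniteMeasure μ]
    {E : Type*} [NormedAddCommGroup E] {f : X → E} (hf : Continuous f) : Integrable f μ :=
  hf.integrable_of_hasCompactSupport
    (IsCompact.of_isClosed_subset isCompact_univ (isClosed_tsupport f) (Set.subset_univ _))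

/-- Existence of Haar measure on a closed subgroup of the torus with needed properties. -/
lemma exists_haar (K : AddSubgroup (Tor n)) (hK : IsClosed (K : Set (Tor n))) :
    ∃ μ : Measure (Tor n), IsProbabilityMeasure μ ∧
      (∀ (f : Tor n → ℂ) (c : ℂ), Continuous f → (∀ x ∈ K, f x = c) → ∫ x, f x ∂μ = c) ∧
      (∀ (f : Tor n → ℝ) (c : ℝ), Continuous f → (∀ x ∈ K, f x = c) → ∫ x, f x ∂μ = c) ∧
      (∀ l : Fin n → ℤ, (∃ x ∈ K, kchar l x ≠ 1) → ∫ x, kchar l x ∂μ = 0) ∧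
      (∀ g : Tor n → ℝ, Continuous g → (∀ x, 0 ≤ g x) → ∀ x₀ ∈ K, 0 < g x₀ →
        0 < ∫ x, g x ∂μ) := by
  haveI : CompactSpace ↥K := isCompact_iff_compactSpace.mp hK.isCompact
  letI : MeasurableSpace ↥K := borel _
  haveI : BorelSpace ↥K := ⟨rfl⟩
  let ν : Measure ↥K := Measure.addHaarMeasure ⊤
  haveI hνp : IsProbabilityMeasure ν := ⟨Measure.addHaarMeasure_self⟩
  have hcont : Continuous ((↑) : ↥K → Tor n) := continuous_subtype_val
  have hmeas : Measurable ((↑) : ↥K → Tor n) := hcont.measurable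
  let μ : Measure (Tor n) := ν.map (↑)
  have hint : ∀ (E : Type) [NormedAddCommGroup E] [NormedSpace ℝ E] (f : Tor n → E),
      Continuous f → ∫ x, f x ∂μ = ∫ k, f (↑k) ∂ν := by
    intro E _ _ f hf
    exact integral_map hmeas.aemeasurable hf.aestronglyMeasurable
  haveI : IsProbabilityMeasure μ := Measure.isProbabilityMeasure_map hmeas.aemeasurable
  refine ⟨μ, inferInstance, ?_, ?_, ?_, ?_⟩
  · intro f c hf hfc
    rw [hint ℂ f hf]
    have : ∀ k : ↥K, f (↑k) = c := fun k => hfc _ k.2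
    simp only [this]
    simp [hνp.measure_univ]
  · intro f c hf hfc
    rw [hint ℝ f hf]
    have : ∀ k : ↥K, f (↑k) = c := fun k => hfc _ k.2
    simp only [this]
    simp [hνp.measure_univ]
  · rintro l ⟨x₀, hx₀K, hx₀⟩
    rw [hint ℂ _ (kchar l).continuous]
    have hinv : ∫ k : ↥K, kchar l ↑(⟨x₀, hx₀K⟩ + k) ∂ν = ∫ k : ↥K, kchar l ↑k ∂ν := by
      exact integral_add_left_eq_self (fun k : ↥K => kchar l ↑k) (⟨x₀, hx₀K⟩ : ↥K)
    have heq : ∀ k : ↥K, kchar l ↑(⟨x₀, hx₀K⟩ + k) = kchar l x₀ * kchar l ↑k := by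
      intro k
      rw [AddSubgroup.coe_add]
      exact kchar_add_arg l x₀ ↑k
    rw [funext heq] at hinv
    rw [integral_const_mul] at hinv
    have h0 : (kchar l x₀ - 1) * ∫ k : ↥K, kchar l ↑k ∂ν = 0 := by
      rw [sub_mul, one_mul]
      exact sub_eq_zero.mpr hinv
    rcases mul_eq_zero.mp h0 with h | h
    · exact absurd (sub_eq_zero.mp h) hx₀
    · exact h
  · intro g hg hg0 x₀ hx₀ hgx₀
    rw [hint ℝ g hg]
    have hgK : Continuous fun k : ↥K => g ↑k := hg.comp hcont
    refine (integral_pos_iff_support_of_nonneg (fun k => hg0 _) ?_).mpr ?_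
    · exact continuous_integrable hgK
    · have hU : IsOpen {k : ↥K | g ↑k > g x₀ / 2} := isOpen_lt continuous_const hgK
      have hne : ({k : ↥K | g ↑k > g x₀ / 2} : Set ↥K).Nonempty :=
        ⟨⟨x₀, hx₀⟩, by simpa using half_lt_self hgx₀⟩
      have hpos : 0 < ν {k : ↥K | g ↑k > g x₀ / 2} := hU.measure_pos ν hne
      refine lt_of_lt_of_le hpos (measure_mono ?_)
      intro k hk
      simp only [Function.mem_support]
      exact ne_of_gt (lt_of_le_of_lt (le_of_lt (half_pos hgx₀)) hk)

end KroneckerProof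

end KroneckerAux

theorem stmt15 (n : ℕ) (α β : Fin n → ℝ) :
    (∀ ε : ℝ, 0 < ε → ∃ q : ℤ, ∃ p : Fin n → ℤ,
        ∀ r, |(q : ℝ) * α r - β r - (p r : ℝ)| < ε) ↔
    (∀ l : Fin n → ℤ, (∃ z : ℤ, ∑ r, (l r : ℝ) * α r = (z : ℝ)) →
        ∃ z : ℤ, ∑ r, (l r : ℝ) * β r = (z : ℝ)) := by
  classical
  open KroneckerProof MeasureTheory in
  constructor
  · rintro h l ⟨z, hz⟩
    have hcl : (∑ r, (l r : ℝ) * β r) ∈ _root_.closure (Set.range ((↑) : ℤ → ℝ)) := by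
      rw [Metric.mem_closure_iff]
      intro δ hδ
      set C : ℝ := (∑ r, |(l r : ℝ)|) + 1 with hC
      have hC0 : 0 < C := by positivity
      obtain ⟨q, p, hqp⟩ := h (δ / C) (div_pos hδ hC0)
      refine ⟨((q * z - ∑ r, l r * p r : ℤ) : ℝ), ⟨_, rfl⟩, ?_⟩
      rw [Real.dist_eq]
      have key : ∑ r, (l r : ℝ) * β r - ((q * z - ∑ r, l r * p r : ℤ) : ℝ)
          = -∑ r, (l r : ℝ) * ((q : ℝ) * α r - β r - (p r : ℝ)) := by
        push_cast
        rw [← hz, Finset.mul_sum, ← Finset.sum_neg_distrib, ← Finset.sum_sub_distrib,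
          ← Finset.sum_sub_distrib]
        exact Finset.sum_congr rfl fun r _ => by ring
      rw [key, abs_neg]
      calc |∑ r, (l r : ℝ) * ((q : ℝ) * α r - β r - (p r : ℝ))|
          ≤ ∑ r, |(l r : ℝ) * ((q : ℝ) * α r - β r - (p r : ℝ))| :=
            Finset.abs_sum_le_sum_abs _ _
        _ ≤ ∑ r, |(l r : ℝ)| * (δ / C) := by
            refine Finset.sum_le_sum fun r _ => ?_
            rw [abs_mul]
            exact mul_le_mul_of_nonneg_left (le_of_lt (hqp r)) (abs_nonneg _)
        _ = (∑ r, |(l r : ℝ)|) * (δ / C) := by rw [Finset.sum_mul]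
        _ < C * (δ / C) := by
            exact mul_lt_mul_of_pos_right (by rw [hC]; exact lt_add_one _) (div_pos hδ hC0)
        _ = δ := by field_simp
    rw [Int.isClosedEmbedding_coe_real.isClosed_range.closure_eq] at hcl
    obtain ⟨z', hz'⟩ := hcl
    exact ⟨z', hz'.symm⟩
  · intro hyp
    set a : Tor n := fun r => ((α r : ℝ) : AddCircle (1:ℝ)) with ha
    set b : Tor n := fun r => ((β r : ℝ) : AddCircle (1:ℝ)) with hb
    set K : AddSubgroup (Tor n) := (AddSubgroup.closure {a}).topologicalClosure with hKdef
    set K' : AddSubgroup (Tor n) := (AddSubgroup.closure {a, b}).topologicalClosure with hK'def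
    have hKc : IsClosed (K : Set (Tor n)) := AddSubgroup.isClosed_topologicalClosure _
    have hK'c : IsClosed (K' : Set (Tor n)) := AddSubgroup.isClosed_topologicalClosure _
    have haK : a ∈ K :=
      AddSubgroup.le_topologicalClosure _ (AddSubgroup.subset_closure rfl)
    have haK' : a ∈ K' :=
      AddSubgroup.le_topologicalClosure _ (AddSubgroup.subset_closure (by left; rfl))
    have hbK' : b ∈ K' :=
      AddSubgroup.le_topologicalClosure _ (AddSubgroup.subset_closure (by right; rfl))
    have hKK' : K ≤ K' := by
      refine AddSubgroup.topologicalClosure_minimal _ ?_ hK'c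
      refine le_trans (AddSubgroup.closure_mono ?_) (AddSubgroup.le_topologicalClosure _)
      intro x hx; rw [Set.mem_singleton_iff] at hx; subst hx; left; rfl
    have hchar : ∀ l : Fin n → ℤ, (∀ x ∈ K, kchar l x = 1) ↔ (∀ x ∈ K', kchar l x = 1) := by
      intro l
      constructor
      · intro hKl
        have hla : kchar l a = 1 := hKl a haK
        have hlb : kchar l b = 1 := by
          rw [hb]
          rw [kchar_mk_eq_one_iff]
          exact hyp l ((kchar_mk_eq_one_iff l α).mp (by rw [ha] at hla; exact hla))
        have hle : K' ≤ kker l := by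
          refine AddSubgroup.topologicalClosure_minimal _ ?_ (isClosed_kker l)
          rw [AddSubgroup.closure_le]
          rintro x (rfl | hx)
          · exact hla
          · rw [Set.mem_singleton_iff] at hx; subst hx; exact hlb
        exact fun x hx => hle hx
      · exact fun h x hx => h x (hKK' hx)
    have hbK : b ∈ K := by
      by_contra hbKn
      obtain ⟨f, hf0, hf1, hf01⟩ :=
        exists_continuous_zero_one_of_isClosed hKc (isClosed_singleton (x := b))
          (Set.disjoint_singleton_right.mpr hbKn)
      obtain ⟨μ, hμp, hμc, hμr, hμ0, hμpos⟩ := exists_haar K hKc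
      obtain ⟨μ', hμ'p, hμ'c, hμ'r, hμ'0, hμ'pos⟩ := exists_haar K' hK'c
      -- integrals agree on the span of characters
      have hspan : ∀ P : C(Tor n, ℂ), P ∈ Submodule.span ℂ (Set.range (kchar (n := n))) →
          ∫ x, P x ∂μ = ∫ x, P x ∂μ' := by
        intro P hP
        induction hP using Submodule.span_induction with
        | mem P hPm =>
          obtain ⟨l, rfl⟩ := hPm
          by_cases hcase : ∀ x ∈ K', kchar l x = 1
          · rw [hμc (kchar l) 1 (kchar l).continuous ((hchar l).mpr hcase),
              hμ'c (kchar l) 1 (kchar l).continuous hcase]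
          · have h1 : ∃ x ∈ K', kchar l x ≠ 1 := by push_neg at hcase; exact hcase
            have h2 : ∃ x ∈ K, kchar l x ≠ 1 := by
              by_contra hn
              push_neg at hn
              exact absurd ((hchar l).mp fun x hx => hn x hx) hcase
            rw [hμ0 l h2, hμ'0 l h1]
        | zero => simp
        | add x y hx hy ihx ihy =>
          show (∫ t, (x t + y t) ∂μ) = ∫ t, (x t + y t) ∂μ'
          rw [integral_add (continuous_integrable x.continuous) (continuous_integrable y.continuous),
            integral_add (continuous_integrable x.continuous) (continuous_integrable y.continuous),
            ihx, ihy]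
        | smul c x hx ih =>
          show (∫ t, c • x t ∂μ) = ∫ t, c • x t ∂μ'
          rw [integral_smul, integral_smul, ih]
      -- all continuous functions
      have hall : ∀ g : C(Tor n, ℂ), ∫ x, g x ∂μ = ∫ x, g x ∂μ' := by
        intro g
        have hdense := span_kchar_dense (n := n)
        have hgmem : g ∈ _root_.closure ((Submodule.span ℂ (Set.range (kchar (n := n)))) :
            Set C(Tor n, ℂ)) := by
          have : g ∈ (Submodule.span ℂ (Set.range (kchar (n := n)))).topologicalClosure := by
            rw [hdense]; trivial
          exact this
        have hdiff : ∀ ε : ℝ, 0 < ε → ‖(∫ x, g x ∂μ) - ∫ x, g x ∂μ'‖ ≤ 2 * ε := by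
          intro ε hε
          obtain ⟨P, hPmem, hPd⟩ := Metric.mem_closure_iff.mp hgmem ε hε
          have hPd' : ‖g - P‖ < ε := by rwa [dist_eq_norm] at hPd
          have hbound : ∀ (ν : Measure (Tor n)) [IsProbabilityMeasure ν],
              ‖(∫ x, g x ∂ν) - ∫ x, P x ∂ν‖ ≤ ε := by
            intro ν hν
            rw [← integral_sub (continuous_integrable g.continuous)
              (continuous_integrable P.continuous)]
            have := norm_integral_le_of_norm_le_const (μ := ν)
              (f := fun x => g x - P x) (C := ε)
              (Filter.Eventually.of_forall fun x => by
                calc ‖g x - P x‖ = ‖(g - P) x‖ := by rw [ContinuousMap.sub_apply]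
                  _ ≤ ‖g - P‖ := ContinuousMap.norm_coe_le_norm _ _
                  _ ≤ ε := le_of_lt hPd')
            simpa [measure_univ] using this
          have heqP := hspan P hPmem
          calc ‖(∫ x, g x ∂μ) - ∫ x, g x ∂μ'‖
              = ‖((∫ x, g x ∂μ) - ∫ x, P x ∂μ) - ((∫ x, g x ∂μ') - ∫ x, P x ∂μ')‖ := by
                rw [heqP]; ring_nf
            _ ≤ ‖(∫ x, g x ∂μ) - ∫ x, P x ∂μ‖ + ‖(∫ x, g x ∂μ') - ∫ x, P x ∂μ'‖ :=
                norm_sub_le _ _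
            _ ≤ ε + ε := add_le_add (hbound μ) (hbound μ')
            _ = 2 * ε := by ring
        have : ‖(∫ x, g x ∂μ) - ∫ x, g x ∂μ'‖ = 0 := by
          by_contra hne
          have hpos : 0 < ‖(∫ x, g x ∂μ) - ∫ x, g x ∂μ'‖ :=
            lt_of_le_of_ne (norm_nonneg _) (Ne.symm hne)
          have := hdiff (‖(∫ x, g x ∂μ) - ∫ x, g x ∂μ'‖ / 4) (by positivity)
          linarith
        exact sub_eq_zero.mp (norm_eq_zero.mp this)
      -- contradiction
      have hfC : Continuous f := f.continuous
      have hreal : ∫ x, f x ∂μ = ∫ x, f x ∂μ' := by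
        have := hall ⟨fun x => ((f x : ℝ) : ℂ), Complex.continuous_ofReal.comp hfC⟩
        simp only [ContinuousMap.coe_mk] at this
        have h1 : (∫ x, ((f x : ℝ) : ℂ) ∂μ) = ((∫ x, f x ∂μ : ℝ) : ℂ) := integral_ofReal
        have h2 : (∫ x, ((f x : ℝ) : ℂ) ∂μ') = ((∫ x, f x ∂μ' : ℝ) : ℂ) := integral_ofReal
        rw [h1, h2] at this
        exact_mod_cast this
      have hzero : ∫ x, f x ∂μ = 0 := hμr f 0 hfC fun x hx => hf0 hx
      have hpos : 0 < ∫ x, f x ∂μ' := by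
        refine hμ'pos f hfC (fun x => (hf01 x).1) b hbK' ?_
        rw [hf1 rfl]; norm_num
      rw [hreal] at hzero
      rw [hzero] at hpos
      exact lt_irrefl 0 hpos
    -- extract the approximation from b ∈ K
    intro ε hε
    have hbcl : b ∈ _root_.closure ((AddSubgroup.closure {a} : AddSubgroup (Tor n)) :
        Set (Tor n)) := hbK
    obtain ⟨y, hy, hyd⟩ := Metric.mem_closure_iff.mp hbcl ε hε
    obtain ⟨q, rfl⟩ := AddSubgroup.mem_closure_singleton.mp hy
    refine ⟨q, fun r => -round (β r - q * α r), fun r => ?_⟩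
    have hr : dist (b r) ((q • a) r) < ε := (dist_pi_lt_iff hε).mp hyd r
    have h1 : (q • a) r = ((q * α r : ℝ) : AddCircle (1:ℝ)) := by
      rw [ha]
      show q • ((α r : ℝ) : AddCircle (1:ℝ)) = _
      rw [← QuotientAddGroup.mk_zsmul]
      simp [zsmul_eq_mul]
    rw [hb] at hr
    simp only at hr
    rw [h1] at hr
    rw [dist_eq_norm, ← QuotientAddGroup.mk_sub, AddCircle.norm_eq] at hr
    simp only [inv_one, one_mul, mul_one] at hr
    have : |(q : ℝ) * α r - β r - (-round (β r - q * α r) : ℤ)| =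
        |β r - q * α r - round (β r - q * α r)| := by
      rw [← abs_neg]
      congr 1
      push_cast
      ring
    rw [this]
    exact hr
end

section
/- Let X be a strongly regular graph with parameters (4m², 2m² + m, m² + m, m² + m), m ≥ 1, and let its adjacency matrix A have spectral decomposition with eigenvalue angles θ_λ = arccos(1/(2m+1)) and θ_τ = π − θ_λ, and let H = J − 2A = √n(E_0 − E_1 + E_2) determine the signs σ_λ = 1, σ_τ = 0. Then for every ε > 0 there exists an integer t such that |e^{i t θ_λ} − (−1)^{σ_λ}| < ε and |e^{i t θ_τ} − (−1)^{σ_τ}| < ε, i.e., one can simultaneously approximate e^{itθ_λ} → −1 and e^{itθ_τ} → 1 with integer t. -/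
open Real

private lemma cos_rec (θ : ℝ) (x : ℝ) :
    Real.cos ((x + 2) * θ) = 2 * Real.cos θ * Real.cos ((x + 1) * θ) - Real.cos (x * θ) := by
  have h1 : (x + 2) * θ = (x + 1) * θ + θ := by ring
  have h2 : x * θ = (x + 1) * θ - θ := by ring
  rw [h1, h2, Real.cos_add, Real.cos_sub]; ring

private lemma key_seq (N : ℕ) (hN : (N : ℝ) ≠ 0) (θ : ℝ) (hθ : Real.cos θ = 1 / N) :
    ∀ n : ℕ, ∃ a : ℤ, 2 * (N : ℝ) ^ (n + 1) * Real.cos ((n + 1 : ℕ) * θ) = a ∧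
      ((a : ZMod N) = 2 ^ (n + 1)) := by
  have hNc : (N : ℝ) * Real.cos θ = 1 := by rw [hθ]; field_simp
  have P1 : ∃ a : ℤ, 2 * (N : ℝ) ^ (0 + 1) * Real.cos ((0 + 1 : ℕ) * θ) = a ∧
      ((a : ZMod N) = 2 ^ (0 + 1)) := by
    refine ⟨2, ?_, by norm_num⟩
    push_cast
    rw [one_mul, hθ]
    field_simp
  have P2 : ∃ a : ℤ, 2 * (N : ℝ) ^ (1 + 1) * Real.cos ((1 + 1 : ℕ) * θ) = a ∧
      ((a : ZMod N) = 2 ^ (1 + 1)) := by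
    refine ⟨4 - 2 * (N : ℤ) ^ 2, ?_, ?_⟩
    · have h2 : ((1 + 1 : ℕ) : ℝ) * θ = 2 * θ := by push_cast; ring
      rw [h2, Real.cos_two_mul, hθ]
      push_cast
      field_simp
      ring
    · push_cast [ZMod.natCast_self]
      ring
  have main : ∀ n : ℕ,
      (∃ a : ℤ, 2 * (N : ℝ) ^ (n + 1) * Real.cos ((n + 1 : ℕ) * θ) = a ∧
        ((a : ZMod N) = 2 ^ (n + 1))) ∧
      (∃ a : ℤ, 2 * (N : ℝ) ^ (n + 2) * Real.cos ((n + 2 : ℕ) * θ) = a ∧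
        ((a : ZMod N) = 2 ^ (n + 2))) := by
    intro n
    induction n with
    | zero => exact ⟨P1, P2⟩
    | succ k ih =>
      obtain ⟨⟨c, hc, hc2⟩, ⟨b, hb, hb2⟩⟩ := ih
      refine ⟨⟨b, hb, hb2⟩, ⟨2 * b - (N : ℤ) ^ 2 * c, ?_, ?_⟩⟩
      · have hrec := cos_rec θ ((k : ℝ) + 1)
        have e1 : ((k : ℝ) + 1 + 2) = ((k + 1 + 2 : ℕ) : ℝ) := by push_cast; ring
        have e2 : ((k : ℝ) + 1 + 1) = ((k + 2 : ℕ) : ℝ) := by push_cast; ring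
        have e3 : ((k : ℝ) + 1) = ((k + 1 : ℕ) : ℝ) := by push_cast; ring
        rw [e1, e2, e3] at hrec
        rw [hrec]
        push_cast
        push_cast at hb hc
        linear_combination (4 * (N : ℝ) ^ (k + 2) * Real.cos (((k : ℝ) + 2) * θ)) * hNc
          + 2 * hb - (N : ℝ) ^ 2 * hc
      · push_cast [ZMod.natCast_self]
        push_cast at hb2
        rw [hb2]
        ring
  intro n
  exact (main n).1

private lemma no_rational (m : ℕ) (hm : 1 ≤ m) (θ : ℝ)
    (hθ : Real.cos θ = 1 / (2 * m + 1)) (hθ0 : 0 ≤ θ) :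
    ∀ p q : ℤ, p ≠ 0 → (p : ℝ) * θ ≠ (q : ℝ) * Real.pi := by
  intro p q hp hpq
  set N : ℕ := 2 * m + 1 with hNdef
  have hNR : ((N : ℝ)) = 2 * m + 1 := by rw [hNdef]; push_cast; ring
  have hNne : (N : ℝ) ≠ 0 := by rw [hNR]; positivity
  have hcos : Real.cos θ = 1 / N := by rw [hNR]; exact hθ
  have hpa : 1 ≤ p.natAbs := Int.natAbs_pos.mpr hp
  set n : ℕ := 2 * p.natAbs - 1 with hn
  have hn1 : n + 1 = 2 * p.natAbs := by omega
  obtain ⟨a, ha, ha2⟩ := key_seq N hNne θ hcos n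
  have hcos1 : Real.cos ((n + 1 : ℕ) * θ) = 1 := by
    have h1 : ((n + 1 : ℕ) : ℝ) * θ = |2 * (p : ℝ)| * θ := by
      rw [hn1]
      push_cast
      rw [abs_mul, Nat.cast_natAbs]
      push_cast
      norm_num
    rw [h1]
    rcases abs_cases (2 * (p : ℝ)) with ⟨h, _⟩ | ⟨h, _⟩
    · rw [h]
      have h3 : 2 * (p : ℝ) * θ = (q : ℝ) * (2 * Real.pi) := by
        rw [mul_assoc, hpq]; ring
      rw [h3]
      exact Real.cos_int_mul_two_pi q
    · rw [h]
      have h3 : -(2 * (p : ℝ)) * θ = ((-q : ℤ) : ℝ) * (2 * Real.pi) := by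
        push_cast; rw [neg_mul, mul_assoc, hpq]; ring
      rw [h3]
      exact Real.cos_int_mul_two_pi (-q)
  rw [hcos1, mul_one] at ha
  have haval : a = 2 * (N : ℤ) ^ (n + 1) := by
    have h := ha.symm
    exact_mod_cast h
  have hunit : IsUnit ((2 : ZMod N) ^ (n + 1)) := by
    have h2 : IsUnit ((2 : ℕ) : ZMod N) := by
      rw [ZMod.isUnit_iff_coprime]
      have hodd : N % 2 = 1 := by omega
      exact Nat.coprime_two_left.mpr (Nat.odd_iff.mpr hodd)
    exact (by exact_mod_cast h2 : IsUnit ((2 : ZMod N))).pow _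
  haveI : Fact (1 < N) := ⟨by omega⟩
  have hzero : ((a : ZMod N)) = 0 := by
    rw [haval]
    have h0 : (((N : ℕ) : ℤ) : ZMod N) = 0 := by
      rw [Int.cast_natCast, ZMod.natCast_self]
    rw [Int.cast_mul, Int.cast_pow, h0, zero_pow (Nat.succ_ne_zero n), mul_zero]
  rw [ha2] at hzero
  exact hunit.ne_zero hzero

private lemma exp_close (x : ℝ) (hx : |x| ≤ 1) :
    ‖Complex.exp ((x : ℂ) * Complex.I) - 1‖ ≤ 2 * |x| := by
  have h : ‖(x : ℂ) * Complex.I‖ = |x| := by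
    rw [norm_mul, Complex.norm_I, mul_one, Complex.norm_real, Real.norm_eq_abs]
  calc ‖Complex.exp ((x : ℂ) * Complex.I) - 1‖
      ≤ 2 * ‖(x : ℂ) * Complex.I‖ :=
        Complex.norm_exp_sub_one_le (by rw [h]; exact hx)
    _ = 2 * |x| := by rw [h]

theorem stmt17 (m : ℕ) (hm : 1 ≤ m)
    (θlam θtau : ℝ)
    (hlam : θlam = Real.arccos (1 / (2 * m + 1)))
    (htau : θtau = Real.pi - θlam) :
    ∀ ε : ℝ, 0 < ε → ∃ t : ℤ,
      ‖Complex.exp ((t : ℂ) * θlam * Complex.I) - (-1)‖ < ε ∧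
      ‖Complex.exp ((t : ℂ) * θtau * Complex.I) - 1‖ < ε := by
  intro ε hε
  have hmR : (1 : ℝ) ≤ m := by exact_mod_cast hm
  have hden : (0 : ℝ) < 2 * m + 1 := by linarith
  have hle : (1 : ℝ) / (2 * m + 1) ≤ 1 := by
    rw [div_le_one hden]; linarith
  have hge : (-1 : ℝ) ≤ 1 / (2 * m + 1) := by
    have h0 : (0 : ℝ) ≤ 1 / (2 * m + 1) := by positivity
    linarith
  have hcos : Real.cos θlam = 1 / (2 * m + 1) := by
    rw [hlam]; exact Real.cos_arccos hge hle
  have hθ0 : 0 ≤ θlam := hlam ▸ Real.arccos_nonneg _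
  rcases (AddSubgroup.closure ({2 * Real.pi, 2 * θlam} : Set ℝ)).dense_or_cyclic with
    hdense | ⟨a, hcyc⟩
  · -- dense case: Kronecker approximation
    set δ : ℝ := min (ε / 3) 1 with hδ
    have hδ0 : 0 < δ := lt_min (by linarith) one_pos
    obtain ⟨s, hsS, hdist⟩ := Metric.mem_closure_iff.mp (hdense (Real.pi - θlam)) δ hδ0
    obtain ⟨j, nn, hjs⟩ := (AddSubgroup.mem_closure_pair).mp hsS
    have hsr : (j : ℝ) * (2 * Real.pi) + (nn : ℝ) * (2 * θlam) = s := by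
      rw [← zsmul_eq_mul, ← zsmul_eq_mul]; exact hjs
    set d : ℝ := s - (Real.pi - θlam) with hd
    have habs_d : |d| < δ := by
      rw [Real.dist_eq, abs_sub_comm] at hdist
      exact hdist
    have hd1 : |d| ≤ 1 := le_of_lt (lt_of_lt_of_le habs_d (min_le_right _ _))
    have hdε : 2 * |d| < ε := by
      have := lt_of_lt_of_le habs_d (min_le_left _ _)
      linarith
    have key1 : ((2 * nn + 1 : ℤ) : ℝ) * θlam
        = Real.pi + d + (-j : ℝ) * (2 * Real.pi) := by
      push_cast
      rw [hd]
      linear_combination hsr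
    refine ⟨2 * nn + 1, ?_, ?_⟩
    · have harg : ((2 * nn + 1 : ℤ) : ℂ) * (θlam : ℂ) * Complex.I
          = (Real.pi : ℂ) * Complex.I + (d : ℂ) * Complex.I
            + ((-j : ℤ) : ℂ) * (2 * (Real.pi : ℂ) * Complex.I) := by
        have hc := congrArg (fun x : ℝ => (x : ℂ)) key1
        push_cast at hc ⊢
        linear_combination Complex.I * hc
      rw [harg, Complex.exp_add, Complex.exp_add, Complex.exp_pi_mul_I,
        Complex.exp_int_mul_two_pi_mul_I]
      have heq : -1 * Complex.exp ((d : ℂ) * Complex.I) * 1 - (-1)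
          = -(Complex.exp ((d : ℂ) * Complex.I) - 1) := by ring
      rw [heq, norm_neg]
      exact lt_of_le_of_lt (exp_close d hd1) hdε
    · have key2 : ((2 * nn + 1 : ℤ) : ℝ) * (Real.pi - θlam)
          = (nn : ℝ) * (2 * Real.pi) + (j : ℝ) * (2 * Real.pi) + (-d) := by
        push_cast at key1 ⊢
        linear_combination (-1 : ℝ) * key1
      have harg : ((2 * nn + 1 : ℤ) : ℂ) * (θtau : ℂ) * Complex.I
          = ((nn : ℤ) : ℂ) * (2 * (Real.pi : ℂ) * Complex.I)
            + ((j : ℤ) : ℂ) * (2 * (Real.pi : ℂ) * Complex.I)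
            + ((-d : ℝ) : ℂ) * Complex.I := by
        rw [htau]
        have hc := congrArg (fun x : ℝ => (x : ℂ)) key2
        push_cast at hc ⊢
        linear_combination Complex.I * hc
      rw [harg, Complex.exp_add, Complex.exp_add, Complex.exp_int_mul_two_pi_mul_I,
        Complex.exp_int_mul_two_pi_mul_I, one_mul, one_mul]
      calc ‖Complex.exp (((-d : ℝ) : ℂ) * Complex.I) - 1‖
          ≤ 2 * |(-d : ℝ)| := exp_close (-d) (by rwa [abs_neg])
        _ = 2 * |d| := by rw [abs_neg]
        _ < ε := hdε
  · -- cyclic case: impossible by irrationality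
    exfalso
    have h1 : (2 * Real.pi) ∈ AddSubgroup.closure ({2 * Real.pi, 2 * θlam} : Set ℝ) :=
      AddSubgroup.subset_closure (by simp)
    have h2 : (2 * θlam) ∈ AddSubgroup.closure ({2 * Real.pi, 2 * θlam} : Set ℝ) :=
      AddSubgroup.subset_closure (by simp)
    rw [hcyc] at h1 h2
    obtain ⟨p, hp⟩ := AddSubgroup.mem_closure_singleton.mp h1
    obtain ⟨q, hq⟩ := AddSubgroup.mem_closure_singleton.mp h2
    rw [zsmul_eq_mul] at hp hq
    have hp0 : p ≠ 0 := by
      rintro rfl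
      rw [Int.cast_zero, zero_mul] at hp
      have := Real.pi_pos
      linarith
    have hrel : (p : ℝ) * θlam = (q : ℝ) * Real.pi := by
      linear_combination ((q : ℝ) / 2) * hp - ((p : ℝ) / 2) * hq
    exact no_rational m hm θlam hcos hθ0 p q hp0 hrel
end
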